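/- Let b, c : ℕ → ℝ be finitely supported sequences, say b_k = 0 for k > K_b and c_k = 0 for k > K_c. Define d : ℕ_{≥1} → ℝ by d_k = (1/k!) Σ_{ν=0}^{k−1} Σ_{λ=0}^{ν} ν! (ν−λ+1)_{k−1−ν} b_{k−1−ν} c_λ. Then for every real m > K_b + K_c + 2, the series Σ_{k=1}^{∞} k! d_k/(m)_{k+1} converges absolutely and the product of the two (finite) inverse factorial series equals it: (Σ_{k=0}^{K_b} k! b_k/(m)_{k+1}) · (Σ_{k=0}^{K_c} k! c_k/(m)_{k+1}) = Σ_{k=1}^{∞} k! d_k/(m)_{k+1}. -/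

import Mathlib

open Finset Filter


/-- The Pochhammer symbol `(x)_j = x(x+1)⋯(x+j−1)`, with `(x)_0 = 1`. -/
noncomputable def poch (x : ℝ) (j : ℕ) : ℝ := ∏ i ∈ Finset.range j, (x + i)

/-- The coefficients `d_k` of the product of two inverse factorial series with
coefficient sequences `b` and `c`:
`d_k = (1/k!) Σ_{ν=0}^{k−1} Σ_{λ=0}^{ν} ν! (ν−λ+1)_{k−1−ν} b_{k−1−ν} c_λ`. -/
noncomputable def prodCoeff (b c : ℕ → ℝ) (k : ℕ) : ℝ :=
  (1 / (Nat.factorial k : ℝ)) *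
    ∑ ν ∈ Finset.range k, ∑ l ∈ Finset.range (ν + 1),
      (Nat.factorial ν : ℝ) * poch ((ν : ℝ) - l + 1) (k - 1 - ν) * b (k - 1 - ν) * c l

lemma poch_succ (x : ℝ) (j : ℕ) : poch x (j+1) = poch x j * (x + j) :=
  Finset.prod_range_succ _ _

lemma poch_one (x : ℝ) : poch x 1 = x := by simp [poch]

lemma poch_pos {x : ℝ} (hx : 0 < x) (j : ℕ) : 0 < poch x j := by
  induction j with
  | zero => simp [poch]
  | succ n ih =>
    rw [poch_succ]
    have : (0:ℝ) < x + n := by positivity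
    exact mul_pos ih this

lemma poch_nonneg {x : ℝ} (hx : 0 ≤ x) (j : ℕ) : 0 ≤ poch x j := by
  apply Finset.prod_nonneg
  intro i _
  positivity

lemma poch_succ' (x : ℝ) (j : ℕ) : poch x (j+1) = x * poch (x+1) j := by
  induction j with
  | zero => simp [poch_succ, poch]
  | succ n ih =>
    rw [poch_succ, ih, poch_succ]
    push_cast
    ring

lemma poch_mono {x y : ℝ} (hx : 0 ≤ x) (hxy : x ≤ y) (j : ℕ) : poch x j ≤ poch y j := by
  apply Finset.prod_le_prod
  · intro i _; positivity
  · intro i _; linarith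

lemma poch_nat (c L : ℕ) : (Nat.factorial c : ℝ) * poch ((c:ℝ)+1) L = (Nat.factorial (c+L) : ℝ) := by
  induction L with
  | zero => simp [poch]
  | succ n ih =>
    rw [poch_succ, ← mul_assoc, ih, show c + (n+1) = (c+n)+1 from rfl, Nat.factorial_succ]
    push_cast
    ring

noncomputable def termT (p q : ℕ) (m : ℝ) (n : ℕ) : ℝ :=
  ((Nat.factorial (p+n) : ℝ) * Nat.factorial (q+n)) / (Nat.factorial n * poch m (p+q+n+2))

lemma factLe (P Q n : ℕ) : Nat.factorial (P+n) * Nat.factorial (Q+n)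
    ≤ Nat.factorial n * Nat.factorial (P+Q+n) := by
  induction Q with
  | zero => simp [Nat.mul_comm]
  | succ q ih =>
    rw [show P+(q+1)+n = (P+q+n)+1 by omega, show (q+1)+n = (q+n)+1 by omega,
      Nat.factorial_succ, Nat.factorial_succ]
    calc Nat.factorial (P+n) * ((q+n+1) * Nat.factorial (q+n))
        = (q+n+1) * (Nat.factorial (P+n) * Nat.factorial (q+n)) := by ring
      _ ≤ (P+q+n+1) * (Nat.factorial n * Nat.factorial (P+q+n)) :=
          Nat.mul_le_mul (by omega) ih
      _ = Nat.factorial n * ((P+q+n+1) * Nat.factorial (P+q+n)) := by ring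

lemma powFactLe (s e n : ℕ) (h : n ≤ s) : (n+1)^e * Nat.factorial s ≤ Nat.factorial (s+e) := by
  induction e with
  | zero => simp
  | succ d ih =>
    rw [pow_succ, show s+(d+1) = (s+d)+1 by omega, Nat.factorial_succ]
    calc (n+1)^d * (n+1) * Nat.factorial s = (n+1) * ((n+1)^d * Nat.factorial s) := by ring
      _ ≤ (s+d+1) * Nat.factorial (s+d) := Nat.mul_le_mul (by omega) ih

lemma natBound (P Q n e : ℕ) :
    Nat.factorial (P+n) * Nat.factorial (Q+n) * (n+1)^e
      ≤ Nat.factorial n * Nat.factorial (2*P+2*Q+n+1+e) := by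
  calc Nat.factorial (P+n) * Nat.factorial (Q+n) * (n+1)^e
      ≤ Nat.factorial n * Nat.factorial (P+Q+n) * (n+1)^e :=
        Nat.mul_le_mul_right _ (factLe P Q n)
    _ = Nat.factorial n * ((n+1)^e * Nat.factorial (P+Q+n)) := by ring
    _ ≤ Nat.factorial n * Nat.factorial (P+Q+n+e) :=
        Nat.mul_le_mul_left _ (powFactLe _ _ _ (by omega))
    _ ≤ Nat.factorial n * Nat.factorial (2*P+2*Q+n+1+e) :=
        Nat.mul_le_mul_left _ (Nat.factorial_le (by omega))

lemma poch_ge_fact (c L : ℕ) {m : ℝ} (h : (c:ℝ)+1 ≤ m) :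
    (Nat.factorial (c+L) : ℝ) ≤ (Nat.factorial c : ℝ) * poch m L := by
  rw [← poch_nat c L]
  have : poch ((c:ℝ)+1) L ≤ poch m L := poch_mono (by positivity) h L
  have hc : (0:ℝ) ≤ Nat.factorial c := by positivity
  nlinarith

lemma frac_le (P Q n e : ℕ) {m : ℝ} (hm : (P:ℝ)+Q+2 ≤ m) :
    ((Nat.factorial (P+n) : ℝ) * Nat.factorial (Q+n)) / (Nat.factorial n * poch m (P+Q+n+e))
      ≤ (Nat.factorial (P+Q+1) : ℝ) / ((n:ℝ)+1)^e := by
  have hm0 : 0 < m := by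
    have h1 : (0:ℝ) ≤ P := Nat.cast_nonneg _
    have h2 : (0:ℝ) ≤ Q := Nat.cast_nonneg _
    linarith
  have hp : 0 < poch m (P+Q+n+e) := poch_pos hm0 _
  have hd : (0:ℝ) < Nat.factorial n * poch m (P+Q+n+e) := by positivity
  rw [div_le_div_iff₀ hd (by positivity)]
  have hge : (Nat.factorial (2*P+2*Q+n+1+e) : ℝ)
      ≤ (Nat.factorial (P+Q+1) : ℝ) * poch m (P+Q+n+e) := by
    have := poch_ge_fact (P+Q+1) (P+Q+n+e) (m := m) (by push_cast; linarith)
    rw [show P+Q+1+(P+Q+n+e) = 2*P+2*Q+n+1+e by omega] at this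
    exact this
  have hnat : ((Nat.factorial (P+n) * Nat.factorial (Q+n) * (n+1)^e : ℕ) : ℝ)
      ≤ ((Nat.factorial n * Nat.factorial (2*P+2*Q+n+1+e) : ℕ) : ℝ) :=
    Nat.cast_le.mpr (natBound P Q n e)
  push_cast at hnat
  have hfn : (0:ℝ) ≤ Nat.factorial n := by positivity
  calc (Nat.factorial (P+n) : ℝ) * Nat.factorial (Q+n) * ((n:ℝ)+1)^e
      ≤ (Nat.factorial n : ℝ) * Nat.factorial (2*P+2*Q+n+1+e) := hnat
    _ ≤ (Nat.factorial n : ℝ) * ((Nat.factorial (P+Q+1) : ℝ) * poch m (P+Q+n+e)) :=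
        mul_le_mul_of_nonneg_left hge hfn
    _ = (Nat.factorial (P+Q+1) : ℝ) * (Nat.factorial n * poch m (P+Q+n+e)) := by ring

lemma termT_nonneg (p q : ℕ) {m : ℝ} (hm : 0 < m) (n : ℕ) : 0 ≤ termT p q m n := by
  have := poch_pos hm (p+q+n+2)
  unfold termT
  positivity

lemma summable_termT (P Q : ℕ) {m : ℝ} (hm : (P:ℝ)+Q+2 ≤ m) : Summable (termT P Q m) := by
  have hm0 : 0 < m := by
    have h1 : (0:ℝ) ≤ P := Nat.cast_nonneg _
    have h2 : (0:ℝ) ≤ Q := Nat.cast_nonneg _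
    linarith
  have hbase : Summable (fun n : ℕ => (1:ℝ)/((n:ℝ)+1)^2) := by
    have h2 : Summable (fun n : ℕ => (1:ℝ)/(n:ℝ)^2) :=
      Real.summable_one_div_nat_pow.mpr one_lt_two
    have := (summable_nat_add_iff 1).mpr h2
    refine this.congr fun n => ?_
    push_cast
    ring
  refine Summable.of_nonneg_of_le (termT_nonneg P Q hm0) (fun n => ?_)
    (hbase.mul_left (Nat.factorial (P+Q+1) : ℝ))
  have := frac_le P Q n 2 hm
  calc termT P Q m n ≤ (Nat.factorial (P+Q+1) : ℝ)/((n:ℝ)+1)^2 := this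
    _ = (Nat.factorial (P+Q+1) : ℝ) * ((1:ℝ)/((n:ℝ)+1)^2) := by ring

lemma cast_pos_of_lt {a : ℕ} {m : ℝ} (h : (a:ℝ) + 2 ≤ m) : 0 < m := by
  have : (0:ℝ) ≤ a := Nat.cast_nonneg _
  linarith

lemma tendsto_inv_shift (C : ℝ) : Tendsto (fun n : ℕ => C/((n:ℝ)+1)) atTop (nhds 0) := by
  have h := tendsto_one_div_add_atTop_nhds_zero_nat (𝕜 := ℝ)
  have := h.const_mul C
  simpa [mul_one_div, div_eq_mul_inv] using this

lemma hasSum_base (q : ℕ) {m : ℝ} (hq : (q:ℝ)+2 < m) :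
    HasSum (termT 0 q m) ((Nat.factorial q : ℝ)/(m * poch m (q+1))) := by
  have hm0 : 0 < m := cast_pos_of_lt hq.le
  set u : ℕ → ℝ := fun j => (Nat.factorial j : ℝ)/poch m (j+1) with hu
  have hpos : ∀ j, (0:ℝ) < poch m j := fun j => poch_pos hm0 j
  have key : ∀ n, termT 0 q m n = (u (q+n) - u (q+(n+1))) / m := by
    intro n
    have e1 : poch m (q+n+2) = poch m (q+n+1) * (m + ((q:ℝ)+n+1)) := by
      rw [show q+n+2 = (q+n+1)+1 by omega, poch_succ]
      push_cast; ring
    simp only [termT, hu]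
    rw [show (0:ℕ)+n = n by omega, show (0:ℕ)+q+n+2 = q+n+2 by omega,
      show q+(n+1)+1 = q+n+2 by omega, e1, show q+(n+1) = (q+n)+1 by omega, Nat.factorial_succ (q+n)]
    have h1 : poch m (q+n+1) ≠ 0 := (hpos _).ne'
    have h2 : m + ((q:ℝ)+n+1) ≠ 0 := by positivity
    have h3 : (Nat.factorial n : ℝ) ≠ 0 := by positivity
    field_simp
    push_cast
    ring
  have hsum : Summable (termT 0 q m) := summable_termT 0 q (by push_cast; linarith)
  have hub : ∀ k : ℕ, u k ≤ (Nat.factorial 1 : ℝ)/((k:ℝ)+1) := by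
    intro k
    have := frac_le 0 0 k 1 (m := m) (by push_cast; linarith)
    simp only [Nat.zero_add, Nat.add_zero, pow_one] at this
    calc u k = ((Nat.factorial k : ℝ) * Nat.factorial k) / (Nat.factorial k * poch m (k+1)) := by
          rw [mul_div_mul_left _ _ (by positivity : (Nat.factorial k : ℝ) ≠ 0)]
      _ ≤ (Nat.factorial 1 : ℝ)/((k:ℝ)+1) := this
  have hunn : ∀ k : ℕ, 0 ≤ u k := fun k => div_nonneg (by positivity) (hpos _).le
  have hub2 : ∀ N : ℕ, u (q+N) ≤ (Nat.factorial 1 : ℝ)/((N:ℝ)+1) := by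
    intro N
    refine (hub (q+N)).trans ?_
    have hq0 : (0:ℝ) ≤ q := Nat.cast_nonneg _
    have hN0 : (0:ℝ) ≤ N := Nat.cast_nonneg _
    apply div_le_div_of_nonneg_left (by positivity) (by positivity)
    push_cast; linarith
  have hlim : Tendsto (fun N : ℕ => u (q+N)) atTop (nhds 0) :=
    squeeze_zero (fun N => hunn _) hub2 (tendsto_inv_shift _)
  rw [hsum.hasSum_iff_tendsto_nat]
  have hps : ∀ N, ∑ n ∈ range N, termT 0 q m n = (u q - u (q+N))/m := by
    intro N
    rw [Finset.sum_congr rfl (fun n _ => key n), ← Finset.sum_div,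
      Finset.sum_range_sub' (fun i => u (q+i)) N]
    simp
  have hT : Tendsto (fun N : ℕ => (u q - u (q+N))/m) atTop (nhds ((u q - 0)/m)) :=
    (tendsto_const_nhds.sub hlim).div_const m
  refine Tendsto.congr (fun N => (hps N).symm) ?_
  convert hT using 2
  simp only [hu, sub_zero]
  rw [div_div, mul_comm]

lemma termT_symm (p q : ℕ) (m : ℝ) : termT p q m = termT q p m := by
  funext n
  simp only [termT]
  rw [mul_comm ((Nat.factorial (p+n) : ℝ)), add_comm p q]

lemma hasSum_termT (p : ℕ) : ∀ (q : ℕ) (m : ℝ), (p:ℝ)+q+2 < m →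
    HasSum (termT p q m)
      (((Nat.factorial p : ℝ) * Nat.factorial q)/(poch m (p+1) * poch m (q+1))) := by
  induction p with
  | zero =>
    intro q m hm
    have h := hasSum_base q (by push_cast at hm ⊢; linarith)
    convert h using 1
    simp [poch_one, Nat.factorial_zero]
  | succ a ih =>
    intro q m hm
    match q with
    | 0 =>
      have h := hasSum_base (a+1) (m := m) (by push_cast at hm ⊢; linarith)
      rw [termT_symm] at h
      convert h using 1
      simp [poch_one, Nat.factorial_zero]
      ring
    | Nat.succ d =>
      have hm0 : 0 < m := by
        have h1 : (0:ℝ) ≤ (a:ℝ) := Nat.cast_nonneg _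
        have h2 : (0:ℝ) ≤ (d:ℝ) := Nat.cast_nonneg _
        push_cast at hm
        linarith
      have hmne : m ≠ 0 := hm0.ne'
      have hmc : (a:ℝ)+d+2 < m+1 := by push_cast at hm; linarith
      have h0 := ih d (m+1) hmc
      set V0 : ℝ := ((Nat.factorial a : ℝ) * Nat.factorial d)/(poch (m+1) (a+1) * poch (m+1) (d+1)) with hV0
      set c : ℝ := ((((a:ℕ)+1)*((d:ℕ)+1) : ℕ) : ℝ)/m with hc
      set f : ℕ → ℝ := fun n =>
        ((Nat.factorial (a+1+n) : ℝ) * Nat.factorial (d+1+n)) /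
          (Nat.factorial n * poch m (a+1+(d+1)+n+1)) with hf
      have hpos : ∀ j, (0:ℝ) < poch m j := fun j => poch_pos hm0 j
      have hpos1 : ∀ j, (0:ℝ) < poch (m+1) j := fun j => poch_pos (by linarith) j
      -- key termwise identity
      have key : ∀ n, f n - f (n+1)
          = m * termT (a+1) (d+1) m n - c * termT a d (m+1) (n+1) := by
        intro n
        have e4 : poch m (a+d+n+4) = poch m (a+d+n+3) * (m + ((a:ℝ)+d+n+3)) := by
          rw [show a+d+n+4 = (a+d+n+3)+1 by omega, poch_succ]; push_cast; ring
        have e5 : poch (m+1) (a+d+n+3) = poch m (a+d+n+4) / m := by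
          have h := poch_succ' m (a+d+n+3)
          rw [show (a+d+n+3)+1 = a+d+n+4 by omega] at h
          rw [h, mul_comm, mul_div_assoc, div_self hmne, mul_one]
        simp only [hf, hc, termT]
        rw [show a+1+(d+1)+n+1 = a+d+n+3 by omega,
          show a+1+(d+1)+(n+1)+1 = a+d+n+4 by omega,
          show a+1+(d+1)+n+2 = a+d+n+4 by omega,
          show a+d+(n+1)+2 = a+d+n+3 by omega,
          show a+1+(n+1) = (a+1+n)+1 by omega,
          show d+1+(n+1) = (d+1+n)+1 by omega,
          show a+(n+1) = a+1+n by omega,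
          show d+(n+1) = d+1+n by omega,
          Nat.factorial_succ (a+1+n), Nat.factorial_succ (d+1+n),
          Nat.factorial_succ n, e5, e4]
        have h1 : poch m (a+d+n+3) ≠ 0 := (hpos _).ne'
        have h2 : m + ((a:ℝ)+d+n+3) ≠ 0 := by positivity
        have h3 : (Nat.factorial n : ℝ) ≠ 0 := by positivity
        have h4 : ((n:ℝ)+1) ≠ 0 := by positivity
        field_simp
        push_cast
        ring
      have hs1 : Summable (termT (a+1) (d+1) m) :=
        summable_termT _ _ (by push_cast at hm ⊢; linarith)
      have h0' : HasSum (fun n => termT a d (m+1) (n+1)) (V0 - termT a d (m+1) 0) := by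
        rw [hasSum_nat_add_iff 1]
        simpa using h0
      have hdiff_summable : Summable (fun n => f n - f (n+1)) :=
        ((hs1.mul_left m).sub (h0'.summable.mul_left c)).congr (fun n => (key n).symm)
      have hfnn : ∀ n, 0 ≤ f n := by
        intro n
        simp only [hf]
        have := (hpos (a+1+(d+1)+n+1)).le
        positivity
      have hfle : ∀ n, f n ≤ (Nat.factorial ((a+1)+(d+1)+1) : ℝ)/((n:ℝ)+1) := by
        intro n
        have := frac_le (a+1) (d+1) n 1 (m := m) (by push_cast at hm ⊢; linarith)
        rw [pow_one] at this
        simpa only [hf] using this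
      have hf0 : Tendsto f atTop (nhds 0) :=
        squeeze_zero hfnn hfle (tendsto_inv_shift _)
      have hdiff : HasSum (fun n => f n - f (n+1)) (f 0) := by
        rw [hdiff_summable.hasSum_iff_tendsto_nat]
        have hps : ∀ N, ∑ n ∈ range N, (f n - f (n+1)) = f 0 - f N :=
          fun N => Finset.sum_range_sub' f N
        have hT : Tendsto (fun N : ℕ => f 0 - f N) atTop (nhds (f 0 - 0)) :=
          tendsto_const_nhds.sub hf0
        rw [sub_zero] at hT
        exact Tendsto.congr (fun N => (hps N).symm) hT
      have hcomb : HasSum (fun n => m * termT (a+1) (d+1) m n)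
          (f 0 + c * (V0 - termT a d (m+1) 0)) := by
        have h := hdiff.add (h0'.mul_left c)
        have he : (fun n => (f n - f (n+1)) + c * termT a d (m+1) (n+1))
            = fun n => m * termT (a+1) (d+1) m n := by
          funext n
          rw [key n]; ring
        rwa [he] at h
      have hfinal : HasSum (termT (a+1) (d+1) m)
          ((f 0 + c * (V0 - termT a d (m+1) 0))/m) := by
        have h := hcomb.div_const m
        have he : (fun n => m * termT (a+1) (d+1) m n / m) = termT (a+1) (d+1) m := by
          funext n
          exact mul_div_cancel_left₀ _ hmne
        rwa [he] at h
      convert hfinal using 1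
      -- value computation
      simp only [hf, hV0, hc, termT]
      rw [show a+1+(d+1)+0+1 = a+d+3 by omega, show a+0 = a by omega,
        show d+0 = d by omega, show a+d+0+2 = a+d+2 by omega]
      have e1 : poch (m+1) (a+d+2) = poch m (a+d+3)/m := by
        have h := poch_succ' m (a+d+2)
        rw [show (a+d+2)+1 = a+d+3 by omega] at h
        rw [h, mul_comm, mul_div_assoc, div_self hmne, mul_one]
      have e2 : poch (m+1) (a+1) = poch m (a+2)/m := by
        have h := poch_succ' m (a+1)
        rw [show (a+1)+1 = a+2 by omega] at h
        rw [h, mul_comm, mul_div_assoc, div_self hmne, mul_one]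
      have e3 : poch (m+1) (d+1) = poch m (d+2)/m := by
        have h := poch_succ' m (d+1)
        rw [show (d+1)+1 = d+2 by omega] at h
        rw [h, mul_comm, mul_div_assoc, div_self hmne, mul_one]
      rw [e1, e2, e3, show a+1+1 = a+2 by omega, show d+1+1 = d+2 by omega,
        Nat.factorial_succ a, Nat.factorial_succ d, Nat.factorial_zero]
      have h1 : poch m (a+d+3) ≠ 0 := (hpos _).ne'
      have h2 : poch m (a+2) ≠ 0 := (hpos _).ne'
      have h3 : poch m (d+2) ≠ 0 := (hpos _).ne'
      field_simp
      push_cast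
      ring

lemma hasSum_g (i j : ℕ) {m : ℝ} (hm : (i:ℝ)+j+2 < m) :
    HasSum (fun k : ℕ => if i + j ≤ k then
        ((Nat.factorial (k-i) : ℝ) * poch (((k-i : ℕ) : ℝ) - j + 1) i) / poch m (k+2) else 0)
      (((Nat.factorial i : ℝ) * Nat.factorial j)/(poch m (i+1) * poch m (j+1))) := by
  have hm0 : 0 < m := by
    have h1 : (0:ℝ) ≤ (i:ℝ) := Nat.cast_nonneg _
    have h2 : (0:ℝ) ≤ (j:ℝ) := Nat.cast_nonneg _
    linarith
  set G : ℕ → ℝ := fun k => if i + j ≤ k then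
      ((Nat.factorial (k-i) : ℝ) * poch (((k-i : ℕ) : ℝ) - j + 1) i) / poch m (k+2) else 0 with hG
  have hshift : (fun n : ℕ => G (n + (i+j))) = termT i j m := by
    funext n
    have hc : i + j ≤ n + (i+j) := Nat.le_add_left _ _
    simp only [hG, if_pos hc]
    rw [show n + (i+j) - i = n+j by omega]
    have e2 : ((n+j : ℕ) : ℝ) - j + 1 = (n:ℝ)+1 := by push_cast; ring
    rw [e2]
    have hfn : (Nat.factorial n : ℝ) ≠ 0 := by positivity
    have e3 : poch ((n:ℝ)+1) i = (Nat.factorial (n+i) : ℝ) / (Nat.factorial n : ℝ) := by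
      rw [eq_div_iff hfn, mul_comm, poch_nat]
    rw [e3]
    simp only [termT]
    rw [show n+(i+j)+2 = i+j+n+2 by omega, show n+j = j+n by omega, show n+i = i+n by omega]
    have hp : poch m (i+j+n+2) ≠ 0 := (poch_pos hm0 _).ne'
    field_simp
  have h1 : HasSum (fun n : ℕ => G (n + (i+j)))
      (((Nat.factorial i : ℝ) * Nat.factorial j)/(poch m (i+1) * poch m (j+1))) := by
    rw [hshift]; exact hasSum_termT i j m hm
  have h2 := (hasSum_nat_add_iff (i+j)).mp h1
  have hz : ∑ t ∈ range (i+j), G t = 0 := by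
    apply Finset.sum_eq_zero
    intro t ht
    rw [mem_range] at ht
    exact if_neg (by omega)
  rw [hz, add_zero] at h2
  exact h2

lemma coeff_expand (b c : ℕ → ℝ) (Kb Kc : ℕ)
    (hb : ∀ k : ℕ, Kb < k → b k = 0) (hc : ∀ k : ℕ, Kc < k → c k = 0) (k : ℕ) :
    (Nat.factorial (k+1) : ℝ) * prodCoeff b c (k+1)
      = ∑ i ∈ range (Kb+1), ∑ j ∈ range (Kc+1),
          (if i + j ≤ k then
            (Nat.factorial (k-i) : ℝ) * poch (((k-i : ℕ) : ℝ) - j + 1) i * b i * c j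
          else 0) := by
  set H : ℕ → ℕ → ℝ := fun i j => if i + j ≤ k then
      (Nat.factorial (k-i) : ℝ) * poch (((k-i : ℕ) : ℝ) - j + 1) i * b i * c j else 0 with hH
  set N : ℕ := k + Kb + Kc + 1 with hN
  have hfne : (Nat.factorial (k+1) : ℝ) ≠ 0 := by positivity
  rw [prodCoeff, ← mul_assoc, mul_one_div, div_self hfne, one_mul]
  -- reflect the outer sum
  rw [← Finset.sum_range_reflect]
  have hL : ∀ i ∈ range (k+1),
      (∑ l ∈ range ((k+1-1-i) + 1), (Nat.factorial (k+1-1-i) : ℝ) *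
        poch (((k+1-1-i : ℕ) : ℝ) - l + 1) (k+1-1-(k+1-1-i)) * b (k+1-1-(k+1-1-i)) * c l)
      = ∑ j ∈ range N, H i j := by
    intro i hi
    rw [mem_range] at hi
    rw [show k+1-1-i = k-i by omega, show k+1-1-(k-i) = i by omega]
    refine (Finset.sum_congr rfl fun j hj => ?_).trans
      (Finset.sum_subset (Finset.range_subset_range.mpr (show k-i+1 ≤ N by omega))
        (fun j _ hj => ?_))
    · rw [mem_range] at hj
      simp only [hH]
      rw [if_pos (by omega)]
    · rw [mem_range] at hj
      push_neg at hj
      simp only [hH]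
      exact if_neg (by omega)
  rw [Finset.sum_congr rfl hL]
  rw [Finset.sum_subset (Finset.range_subset_range.mpr (show k+1 ≤ N by omega))
    (fun i _ hi => Finset.sum_eq_zero fun j _ => by
      rw [mem_range] at hi
      push_neg at hi
      exact if_neg (by omega))]
  -- now RHS side
  symm
  rw [Finset.sum_congr rfl (fun i (hi : i ∈ range (Kb+1)) => Finset.sum_subset
    (Finset.range_subset_range.mpr (show Kc+1 ≤ N by omega))
    (fun j _ hj => by
      rw [mem_range] at hj
      push_neg at hj
      have : c j = 0 := hc j (by omega)
      simp [hH, this]))]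
  rw [Finset.sum_subset (Finset.range_subset_range.mpr (show Kb+1 ≤ N by omega))
    (fun i _ hi => Finset.sum_eq_zero fun j _ => by
      rw [mem_range] at hi
      push_neg at hi
      have : b i = 0 := hb i (by omega)
      simp [hH, this])]

/-- Product of two finite inverse factorial series: if `b_k = 0` for `k > K_b` and
`c_k = 0` for `k > K_c`, then for every real `m > K_b + K_c + 2` the series
`Σ_{k=1}^{∞} k! d_k/(m)_{k+1}` converges absolutely and equals the product
`(Σ_{k=0}^{K_b} k! b_k/(m)_{k+1})·(Σ_{k=0}^{K_c} k! c_k/(m)_{k+1})`.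
(The series over `k ≥ 1` is indexed by `k ∈ ℕ` via the shift `k ↦ k+1`.) -/
theorem product_of_finite_inverse_factorial_series
    (b c : ℕ → ℝ) (Kb Kc : ℕ)
    (hb : ∀ k : ℕ, Kb < k → b k = 0) (hc : ∀ k : ℕ, Kc < k → c k = 0)
    (m : ℝ) (hm : (Kb : ℝ) + Kc + 2 < m) :
    Summable (fun k : ℕ =>
        |(Nat.factorial (k + 1) : ℝ) * prodCoeff b c (k + 1) / poch m (k + 2)|)
    ∧ (∑ k ∈ Finset.range (Kb + 1), (Nat.factorial k : ℝ) * b k / poch m (k + 1))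
        * (∑ k ∈ Finset.range (Kc + 1), (Nat.factorial k : ℝ) * c k / poch m (k + 1))
      = ∑' k : ℕ, (Nat.factorial (k + 1) : ℝ) * prodCoeff b c (k + 1) / poch m (k + 2) := by
  have hm0 : 0 < m := by
    have h1 : (0:ℝ) ≤ (Kb:ℝ) := Nat.cast_nonneg _
    have h2 : (0:ℝ) ≤ (Kc:ℝ) := Nat.cast_nonneg _
    linarith
  set G : ℕ → ℕ → ℕ → ℝ := fun i j k => if i + j ≤ k then
      ((Nat.factorial (k-i) : ℝ) * poch (((k-i : ℕ) : ℝ) - j + 1) i) / poch m (k+2) else 0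
    with hGdef
  have hmij : ∀ i ∈ range (Kb+1), ∀ j ∈ range (Kc+1), (i:ℝ)+j+2 < m := by
    intro i hi j hj
    rw [mem_range] at hi hj
    have h1 : (i:ℝ) ≤ Kb := Nat.cast_le.mpr (by omega)
    have h2 : (j:ℝ) ≤ Kc := Nat.cast_le.mpr (by omega)
    linarith
  have hGnn : ∀ i j k, 0 ≤ G i j k := by
    intro i j k
    simp only [hGdef]
    split_ifs with h
    · have hb0 : (0:ℝ) ≤ ((k-i : ℕ) : ℝ) - j + 1 := by
        have : (j:ℝ) ≤ ((k-i : ℕ) : ℝ) := Nat.cast_le.mpr (by omega)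
        linarith
      exact div_nonneg (mul_nonneg (by positivity) (poch_nonneg hb0 i)) (poch_pos hm0 _).le
    · exact le_refl 0
  have hAk : ∀ k : ℕ, (Nat.factorial (k+1) : ℝ) * prodCoeff b c (k+1) / poch m (k+2)
      = ∑ i ∈ range (Kb+1), ∑ j ∈ range (Kc+1), b i * c j * G i j k := by
    intro k
    rw [coeff_expand b c Kb Kc hb hc k, Finset.sum_div]
    refine Finset.sum_congr rfl fun i _ => ?_
    rw [Finset.sum_div]
    refine Finset.sum_congr rfl fun j _ => ?_
    simp only [hGdef]
    split_ifs with h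
    · ring
    · simp
  have hGsum : ∀ i ∈ range (Kb+1), ∀ j ∈ range (Kc+1),
      HasSum (fun k => b i * c j * G i j k)
        (b i * c j * (((Nat.factorial i : ℝ) * Nat.factorial j)
          /(poch m (i+1) * poch m (j+1)))) :=
    fun i hi j hj => (hasSum_g i j (hmij i hi j hj)).mul_left _
  have hA : HasSum (fun k => ∑ i ∈ range (Kb+1), ∑ j ∈ range (Kc+1), b i * c j * G i j k)
      (∑ i ∈ range (Kb+1), ∑ j ∈ range (Kc+1), b i * c j *
        (((Nat.factorial i : ℝ) * Nat.factorial j)/(poch m (i+1) * poch m (j+1)))) :=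
    hasSum_sum fun i hi => hasSum_sum fun j hj => hGsum i hi j hj
  have hA' : HasSum (fun k : ℕ =>
      (Nat.factorial (k+1) : ℝ) * prodCoeff b c (k+1) / poch m (k+2))
      (∑ i ∈ range (Kb+1), ∑ j ∈ range (Kc+1), b i * c j *
        (((Nat.factorial i : ℝ) * Nat.factorial j)/(poch m (i+1) * poch m (j+1)))) := by
    rw [show (fun k : ℕ => (Nat.factorial (k+1) : ℝ) * prodCoeff b c (k+1) / poch m (k+2))
      = fun k => ∑ i ∈ range (Kb+1), ∑ j ∈ range (Kc+1), b i * c j * G i j k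
      from funext hAk]
    exact hA
  constructor
  · set M : ℕ → ℝ := fun k => ∑ i ∈ range (Kb+1), ∑ j ∈ range (Kc+1), |b i * c j| * G i j k
      with hMdef
    have hM : Summable M := summable_sum fun i hi => summable_sum fun j hj =>
      ((hasSum_g i j (hmij i hi j hj)).summable.mul_left _)
    refine Summable.of_nonneg_of_le (fun k => abs_nonneg _) (fun k => ?_) hM
    rw [hAk k]
    simp only [hMdef]
    refine (Finset.abs_sum_le_sum_abs _ _).trans (Finset.sum_le_sum fun i hi => ?_)
    refine (Finset.abs_sum_le_sum_abs _ _).trans (Finset.sum_le_sum fun j hj => ?_)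
    rw [abs_mul, abs_of_nonneg (hGnn i j k)]
  · rw [hA'.tsum_eq, Finset.sum_mul_sum]
    refine Finset.sum_congr rfl fun i hi => Finset.sum_congr rfl fun j hj => ?_
    have h1 : poch m (i+1) ≠ 0 := (poch_pos hm0 _).ne'
    have h2 : poch m (j+1) ≠ 0 := (poch_pos hm0 _).ne'
    field_simp
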